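/- arXiv:1406.3849 — 3 statements merged into one kernel-verified Lean document; each statement's English description precedes it below -/
import Mathlib

section
/- Let f : X → ℝ^d be a measurable function on a metric space X, E ⊆ X a Borel set, and suppose there exists a probability measure ϖ supported on E with ∬_{E×E} |f(x) - f(y)|^{-λ} ϖ(dx) ϖ(dy) < ∞ for some λ > 0. Then the λ-dimensional Hausdorff measure of f(E) is strictly positive: ℋ^λ(f(E)) > 0. -/
/-!
Push `ϖ` restricted to `E` forward to a measure `ν` on `ℝ^d`; its Riesz `λ`-energy is the given
double integral, so its potential `x ↦ ∫ |x - y|^{-λ} dν(y)` is finite `ν`-a.e. Hence the sublevel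
set `{potential ≤ n}` carries positive mass for some `n`, and by Markov's inequality at any of its
points, `ν` restricted to that set gives every ball of radius `r` mass at most `n (2r)^λ`. The mass
distribution principle then bounds `ℋ^λ` from below by a positive multiple of this measure.
-/

open MeasureTheory
open scoped ENNReal

namespace MeasureTheory

open Metric

variable {Y : Type*} [EMetricSpace Y] [MeasurableSpace Y] [BorelSpace Y]

theorem Measure.inv_smul_le_hausdorffMeasure_of_measure_closedEBall_le {ν : Measure Y} {l : ℝ}
    {C : ℝ≥0∞} (hν : ∀ z r, r ≤ 1 → ν (closedEBall z r) ≤ C * r ^ l) : C⁻¹ • ν ≤ μH[l] := by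
  refine Measure.le_hausdorffMeasure l _ 1 one_pos fun s hs ↦ ?_
  rcases s.eq_empty_or_nonempty with rfl | ⟨z, hz⟩
  · simp
  have hsub : s ⊆ closedEBall z (ediam s) := fun _ hy ↦ edist_le_ediam_of_mem hy hz
  calc C⁻¹ * ν s ≤ C⁻¹ * (C * ediam s ^ l) :=
        mul_le_mul_right ((measure_mono hsub).trans (hν z _ hs)) _
    _ ≤ ediam s ^ l := by
        rw [← mul_assoc]
        exact mul_le_of_le_one_left' (ENNReal.inv_mul_le_one C)

noncomputable def rieszPotential (ν : Measure Y) (l : ℝ) (x : Y) : ℝ≥0∞ :=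
  ∫⁻ y, edist x y ^ (-l) ∂ν

noncomputable def rieszEnergy (ν : Measure Y) (l : ℝ) : ℝ≥0∞ :=
  ∫⁻ x, rieszPotential ν l x ∂ν

variable {ν : Measure Y} {l : ℝ}

theorem measure_closedEBall_le_of_rieszPotential_le (hl : 0 < l) {x : Y} {c : ℝ≥0∞} (hc : c ≠ ∞)
    (hx : rieszPotential ν l x ≤ c) {r : ℝ≥0∞} (hr : r ≠ ∞) :
    ν (closedEBall x r) ≤ c * r ^ l := by
  have markov : r ^ (-l) * ν (closedEBall x r) ≤ c := by
    refine le_trans (mul_le_mul_right (measure_mono fun y hy ↦ ?_) _)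
      ((mul_meas_ge_le_lintegral₀ (measurable_edist_right.pow_const _).aemeasurable _).trans hx)
    rw [Set.mem_ofPred_eq, ENNReal.rpow_neg, ENNReal.rpow_neg]
    exact ENNReal.inv_le_inv.2 (ENNReal.rpow_le_rpow (mem_closedEBall'.1 hy) hl.le)
  have hr' : r ^ (-l) ≠ 0 := by simp [hr, hl.le]
  calc ν (closedEBall x r) ≤ c / r ^ (-l) :=
        (ENNReal.le_div_iff_mul_le (.inl hr') (.inr hc)).2 (by rwa [mul_comm])
    _ = c * r ^ l := by rw [div_eq_mul_inv, ENNReal.rpow_neg, inv_inv]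

theorem restrict_measure_closedEBall_le_of_rieszPotential_le (hl : 0 < l) {c : ℝ≥0∞}
    (hc : c ≠ ∞) (z : Y) {r : ℝ≥0∞} (hr : r ≤ 1) :
    ν.restrict {x | rieszPotential ν l x ≤ c} (closedEBall z r) ≤ c * 2 ^ l * r ^ l := by
  rw [Measure.restrict_apply isClosed_closedEBall.measurableSet]
  rcases Set.eq_empty_or_nonempty (closedEBall z r ∩ {x | rieszPotential ν l x ≤ c})
    with h | ⟨x, hxz, hx⟩
  · simp [h]
  have hsub : closedEBall z r ⊆ closedEBall x (2 * r) := fun y hy ↦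
    calc edist y x ≤ edist y z + edist x z := edist_triangle_right _ _ _
      _ ≤ 2 * r := by rw [two_mul]; exact add_le_add hy hxz
  calc ν (closedEBall z r ∩ {x | rieszPotential ν l x ≤ c})
      ≤ ν (closedEBall x (2 * r)) := measure_mono (Set.inter_subset_left.trans hsub)
    _ ≤ c * (2 * r) ^ l := measure_closedEBall_le_of_rieszPotential_le hl hc hx
        (ENNReal.mul_ne_top ENNReal.ofNat_ne_top (ne_top_of_le_ne_top ENNReal.one_ne_top hr))
    _ = c * 2 ^ l * r ^ l := by rw [ENNReal.mul_rpow_of_nonneg _ _ hl.le, mul_assoc]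

theorem exists_nat_measure_inter_setOf_le_ne_zero {α : Type*} [MeasurableSpace α] {μ : Measure α}
    {g : α → ℝ≥0∞} (hg : ∀ᵐ x ∂μ, g x < ∞) {S : Set α} (hS : μ S ≠ 0) :
    ∃ n : ℕ, μ (S ∩ {x | g x ≤ n}) ≠ 0 := by
  by_contra! h
  refine hS (measure_mono_null_ae ?_ (measure_iUnion_null h))
  filter_upwards [hg] with x hx hxS
  obtain ⟨n, hn⟩ := ENNReal.exists_nat_gt hx.ne
  exact Set.mem_iUnion.2 ⟨n, hxS, hn.le⟩

theorem measurable_rieszPotential [SecondCountableTopology Y] [SFinite ν] :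
    Measurable (rieszPotential ν l) :=
  (measurable_edist.pow_const _).lintegral_prod_right'

theorem hausdorffMeasure_pos_of_rieszEnergy_ne_top [SecondCountableTopology Y] [SFinite ν]
    (hl : 0 < l) (hν : rieszEnergy ν l ≠ ∞) {S : Set Y} (hS : ν S ≠ 0) : 0 < μH[l] S := by
  obtain ⟨n, hn⟩ := exists_nat_measure_inter_setOf_le_ne_zero
    (ae_lt_top measurable_rieszPotential hν) hS
  have hC : (n : ℝ≥0∞) * 2 ^ l ≠ ∞ :=
    ENNReal.mul_ne_top (ENNReal.natCast_ne_top n) (by simp)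
  have hfrostman := Measure.inv_smul_le_hausdorffMeasure_of_measure_closedEBall_le
    (ν := ν.restrict {x | rieszPotential ν l x ≤ n})
    (restrict_measure_closedEBall_le_of_rieszPotential_le hl (ENNReal.natCast_ne_top n))
  calc 0 < ((n : ℝ≥0∞) * 2 ^ l)⁻¹ * ν (S ∩ {x | rieszPotential ν l x ≤ n}) :=
        ENNReal.mul_pos (ENNReal.inv_ne_zero.2 hC) hn
    _ ≤ ((n : ℝ≥0∞) * 2 ^ l)⁻¹ * ν.restrict {x | rieszPotential ν l x ≤ n} S :=
        mul_le_mul_right (Measure.le_restrict_apply _ _) _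
    _ ≤ μH[l] S := hfrostman S

end MeasureTheory

theorem hausdorff_image_pos_of_finite_energy_general
    {X : Type*} [MeasurableSpace X]
    (d : ℕ) (f : X → EuclideanSpace ℝ (Fin d)) (hf : Measurable f)
    (E : Set X)
    (ϖ : Measure X) [IsProbabilityMeasure ϖ] (hϖ : ϖ Eᶜ = 0)
    (l : ℝ) (hl : 0 < l)
    (hfin : (∫⁻ x in E, ∫⁻ y in E, (edist (f x) (f y)) ^ (-l) ∂ϖ ∂ϖ) < ∞) :
    0 < μH[l] (f '' E) := by
  set ν := (ϖ.restrict E).map f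
  have henergy : rieszEnergy ν l = ∫⁻ x in E, ∫⁻ y in E, edist (f x) (f y) ^ (-l) ∂ϖ ∂ϖ := by
    rw [rieszEnergy, lintegral_map measurable_rieszPotential hf]
    exact lintegral_congr fun x ↦ lintegral_map (measurable_edist_right.pow_const _) hf
  have hϖE : ϖ E ≠ 0 := fun h ↦ by simpa using measure_union_null h hϖ
  refine hausdorffMeasure_pos_of_rieszEnergy_ne_top hl (henergy ▸ hfin.ne)
    (ne_bot_of_le_ne_bot hϖE ?_)
  calc ϖ E = ϖ.restrict E E := (Measure.restrict_apply_self _ _).symm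
    _ ≤ ϖ.restrict E (f ⁻¹' (f '' E)) := measure_mono (Set.subset_preimage_image f E)
    _ ≤ ν (f '' E) := Measure.le_map_apply hf.aemeasurable _

/-- if `f : X → ℝ^d` is measurable, `E ⊆ X` is Borel, and some probability
measure `ϖ` supported on `E` has finite `λ`-energy for the kernel `|f x - f y|^{-λ}`
(with `0^{-λ} = ∞`), then `ℋ^λ(f(E)) > 0`. -/
theorem hausdorff_image_pos_of_finite_energy
    {X : Type*} [MetricSpace X] [MeasurableSpace X] [BorelSpace X]
    (d : ℕ) (f : X → EuclideanSpace ℝ (Fin d)) (hf : Measurable f)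
    (E : Set X) (hE : MeasurableSet E)
    (ϖ : Measure X) [IsProbabilityMeasure ϖ] (hϖ : ϖ Eᶜ = 0)
    (l : ℝ) (hl : 0 < l)
    (hfin : (∫⁻ x in E, ∫⁻ y in E, (edist (f x) (f y)) ^ (-l) ∂ϖ ∂ϖ) < ∞) :
    0 < μH[l] (f '' E) :=
  hausdorff_image_pos_of_finite_energy_general d f hf E ϖ hϖ l hl hfin
end

section
/- Let f : [0,T] → ℝ^d be a function and p ∈ (0,∞). Then the p-dimensional Hausdorff measure of the image satisfies ℋ^p(f([0,T])) ≤ 2^p V_p(f,[0,T]), where V_p(f,[0,T]) = sup over finite partitions 0 = t_0 < t_1 < ⋯ < t_m = T of Σ_{j=0}^{m-1} |f(t_{j+1}) - f(t_j)|^p is the p-variation of f. -/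
open MeasureTheory
open scoped ENNReal

/-- The `p`-variation of `f` on `[0,T]`: the supremum over finite partitions
`0 = t₀ < t₁ < ⋯ < t_m = T` of `Σ_j |f(t_{j+1}) - f(t_j)|^p`. -/
noncomputable def pVariation (d : ℕ) (p T : ℝ) (f : ℝ → EuclideanSpace ℝ (Fin d)) : ℝ≥0∞ :=
  ⨆ (m : ℕ) (t : Fin (m + 1) → ℝ) (_ : StrictMono t) (_ : t 0 = 0)
    (_ : t (Fin.last m) = T),
    ∑ j : Fin m, ENNReal.ofReal (dist (f (t j.succ)) (f (t j.castSucc)) ^ p)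

/-!
Let `w t = V_p(f, [0, t])`. Appending a point to a partition of `[0, u]` shows
`|f v - f u| ^ p ≤ w v - w u` for `u ≤ v`, so `f` factors on `[0, T]` as `g ∘ w` with `g` a
`1/p`-Hölder map with constant `1` on `w '' [0, T] ⊆ [0, V_p(f, [0, T])]`. A `1/p`-Hölder map
sends `ℋ^1` to `ℋ^p` without increase, whence `ℋ^p(f [0, T]) ≤ ℋ^1 [0, V_p] = V_p`.
-/

theorem hausdorffMeasure_image_le_of_edist_rpow_le {α X Y : Type*} [Nonempty α]
    [EMetricSpace X] [MeasurableSpace X] [BorelSpace X]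
    [EMetricSpace Y] [MeasurableSpace Y] [BorelSpace Y]
    {p : ℝ} (hp : 0 < p) {f : α → X} {w : α → Y} {s : Set α}
    (h : ∀ u ∈ s, ∀ v ∈ s, edist (f u) (f v) ^ p ≤ edist (w u) (w v)) :
    μH[p] (f '' s) ≤ μH[1] (w '' s) := by
  have hf : ∀ u ∈ s, ∀ v ∈ s, edist (f u) (f v) ≤ edist (w u) (w v) ^ p⁻¹ :=
    fun u hu v hv => (ENNReal.le_rpow_inv_iff hp).2 (h u hu v hv)
  set g := f ∘ Function.invFunOn w s
  have hgw : ∀ u ∈ s, g (w u) = f u := by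
    intro u hu
    obtain ⟨hmem, heq⟩ := Function.invFunOn_pos (b := w u) ⟨u, hu, rfl⟩
    simpa [g, heq, ENNReal.zero_rpow_of_pos (inv_pos.2 hp)] using hf _ hmem u hu
  have himage : f '' s = g '' (w '' s) := by
    rw [Set.image_image]
    exact Set.image_congr fun u hu => (hgw u hu).symm
  have hg : HolderOnWith 1 p⁻¹.toNNReal g (w '' s) := by
    rintro _ ⟨u, hu, rfl⟩ _ ⟨v, hv, rfl⟩
    rw [hgw u hu, hgw v hv, ENNReal.coe_one, one_mul, Real.coe_toNNReal _ (inv_nonneg.2 hp.le)]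
    exact hf u hu v hv
  have := hg.hausdorffMeasure_image_le (Real.toNNReal_pos.2 (inv_pos.2 hp)) hp.le
  rwa [ENNReal.coe_one, ENNReal.one_rpow, one_mul, Real.coe_toNNReal _ (inv_nonneg.2 hp.le),
    inv_mul_cancel₀ hp.ne', ← himage] at this

section pVariation

variable {d : ℕ} {p : ℝ} {f : ℝ → EuclideanSpace ℝ (Fin d)}

theorem sum_le_pVariation {T : ℝ} {m : ℕ} {t : Fin (m + 1) → ℝ} (ht : StrictMono t)
    (h0 : t 0 = 0) (hT : t (Fin.last m) = T) :
    ∑ j : Fin m, ENNReal.ofReal (dist (f (t j.succ)) (f (t j.castSucc)) ^ p) ≤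
      pVariation d p T f :=
  le_iSup_of_le m <| le_iSup_of_le t <| le_iSup_of_le ht <| le_iSup_of_le h0 <|
    le_iSup_of_le hT le_rfl

theorem sum_add_ofReal_dist_rpow_le_pVariation {s T : ℝ} (hsT : s < T) {m : ℕ}
    {t : Fin (m + 1) → ℝ} (ht : StrictMono t) (h0 : t 0 = 0) (hs : t (Fin.last m) = s) :
    ∑ j : Fin m, ENNReal.ofReal (dist (f (t j.succ)) (f (t j.castSucc)) ^ p) +
      ENNReal.ofReal (dist (f T) (f s) ^ p) ≤ pVariation d p T f := by
  have hsnoc : StrictMono (Fin.snoc t T : Fin (m + 2) → ℝ) := by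
    refine Fin.strictMono_iff_lt_succ.2 fun i => ?_
    induction i using Fin.lastCases with
    | last => rw [Fin.succ_last, Fin.snoc_last, Fin.snoc_castSucc, hs]; exact hsT
    | cast j =>
      rw [Fin.succ_castSucc, Fin.snoc_castSucc, Fin.snoc_castSucc]; exact ht Fin.castSucc_lt_succ
  have h0' : (Fin.snoc t T : Fin (m + 2) → ℝ) 0 = 0 := by
    rw [← Fin.castSucc_zero, Fin.snoc_castSucc, h0]
  convert sum_le_pVariation hsnoc h0' (Fin.snoc_last _ _) using 1
  simp only [Fin.sum_univ_castSucc (n := m), Fin.succ_castSucc, Fin.succ_last, Fin.snoc_castSucc,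
    Fin.snoc_last, hs]

theorem pVariation_add_ofReal_dist_rpow_le {s T : ℝ} (hs : 0 ≤ s) (hsT : s < T) :
    pVariation d p s f + ENNReal.ofReal (dist (f T) (f s) ^ p) ≤ pVariation d p T f := by
  set c := ENNReal.ofReal (dist (f T) (f s) ^ p)
  have hc : c ≤ pVariation d p T f := by
    rcases hs.eq_or_lt with rfl | hs
    · simpa using sum_add_ofReal_dist_rpow_le_pVariation (f := f) (p := p) hsT
        (t := fun _ : Fin 1 => 0) (Subsingleton.strictMono (α := Fin 1) _) rfl rfl
    · refine le_add_self.trans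
        (sum_add_ofReal_dist_rpow_le_pVariation hsT (t := ![0, s]) ?_ rfl rfl)
      simpa [Fin.strictMono_iff_lt_succ] using hs
  have hle : pVariation d p s f ≤ pVariation d p T f - c :=
    iSup_le fun m => iSup_le fun t => iSup_le fun ht => iSup_le fun h0 => iSup_le fun hs =>
      ENNReal.le_sub_of_add_le_right ENNReal.ofReal_ne_top
        (sum_add_ofReal_dist_rpow_le_pVariation hsT ht h0 hs)
  calc pVariation d p s f + c ≤ pVariation d p T f - c + c := add_le_add_left hle c
    _ = pVariation d p T f := tsub_add_cancel_of_le hc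

theorem pVariation_mono {s T : ℝ} (hs : 0 ≤ s) (hsT : s ≤ T) :
    pVariation d p s f ≤ pVariation d p T f := by
  rcases hsT.eq_or_lt with rfl | hsT
  · exact le_rfl
  · exact le_self_add.trans (pVariation_add_ofReal_dist_rpow_le hs hsT)

theorem edist_rpow_le_edist_toReal_pVariation (hp : 0 < p) {s T : ℝ} (hs : 0 ≤ s)
    (hsT : s ≤ T) (hT : pVariation d p T f ≠ ∞) :
    edist (f s) (f T) ^ p ≤ edist (pVariation d p s f).toReal (pVariation d p T f).toReal := by
  rcases hsT.eq_or_lt with rfl | hsT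
  · simp [ENNReal.zero_rpow_of_pos hp]
  have hsfin : pVariation d p s f ≠ ∞ := ne_top_of_le_ne_top hT (pVariation_mono hs hsT.le)
  calc edist (f s) (f T) ^ p = ENNReal.ofReal (dist (f T) (f s) ^ p) := by
        rw [edist_comm, edist_dist, ENNReal.ofReal_rpow_of_nonneg dist_nonneg hp.le]
    _ ≤ pVariation d p T f - pVariation d p s f :=
        ENNReal.le_sub_of_add_le_left hsfin (pVariation_add_ofReal_dist_rpow_le hs hsT)
    _ = ENNReal.ofReal ((pVariation d p T f).toReal - (pVariation d p s f).toReal) := by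
        rw [ENNReal.ofReal_sub _ ENNReal.toReal_nonneg, ENNReal.ofReal_toReal hT,
          ENNReal.ofReal_toReal hsfin]
    _ ≤ edist (pVariation d p s f).toReal (pVariation d p T f).toReal := by
        rw [edist_dist, Real.dist_eq, abs_sub_comm]
        exact ENNReal.ofReal_le_ofReal (le_abs_self _)

end pVariation

theorem hausdorff_image_le_pVariation_general
    (d : ℕ) (T p : ℝ) (hp : 0 < p)
    (f : ℝ → EuclideanSpace ℝ (Fin d)) :
    μH[p] (f '' Set.Icc 0 T) ≤ ENNReal.ofReal (2 ^ p) * pVariation d p T f := by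
  by_cases hV : pVariation d p T f = ∞
  · simp [hV, ENNReal.mul_top, Real.rpow_pos_of_pos two_pos p]
  set w : ℝ → ℝ := fun t => (pVariation d p t f).toReal
  have hdist : ∀ u ∈ Set.Icc 0 T, ∀ v ∈ Set.Icc 0 T,
      edist (f u) (f v) ^ p ≤ edist (w u) (w v) := by
    intro u hu v hv
    have hfin {t : ℝ} (ht : t ∈ Set.Icc 0 T) : pVariation d p t f ≠ ∞ :=
      ne_top_of_le_ne_top hV (pVariation_mono ht.1 ht.2)
    rcases le_total u v with huv | hvu
    · exact edist_rpow_le_edist_toReal_pVariation hp hu.1 huv (hfin hv)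
    · rw [edist_comm, edist_comm (w u)]
      exact edist_rpow_le_edist_toReal_pVariation hp hv.1 hvu (hfin hu)
  have hrange : w '' Set.Icc 0 T ⊆ Set.Icc 0 (pVariation d p T f).toReal := by
    rintro _ ⟨t, ht, rfl⟩
    exact ⟨ENNReal.toReal_nonneg, ENNReal.toReal_mono hV (pVariation_mono ht.1 ht.2)⟩
  calc μH[p] (f '' Set.Icc 0 T) ≤ μH[1] (w '' Set.Icc 0 T) :=
        hausdorffMeasure_image_le_of_edist_rpow_le hp hdist
    _ ≤ volume (Set.Icc 0 (pVariation d p T f).toReal) := by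
        rw [← hausdorffMeasure_real]; exact measure_mono hrange
    _ = pVariation d p T f := by rw [Real.volume_Icc, sub_zero, ENNReal.ofReal_toReal hV]
    _ ≤ ENNReal.ofReal (2 ^ p) * pVariation d p T f := by
        refine le_mul_of_one_le_left zero_le ?_
        exact ENNReal.one_le_ofReal.2 (Real.one_le_rpow one_le_two hp.le)

/-- `ℋ^p(f([0,T])) ≤ 2^p V_p(f, [0,T])`. -/
theorem hausdorff_image_le_pVariation
    (d : ℕ) (T p : ℝ) (hT : 0 < T) (hp : 0 < p)
    (f : ℝ → EuclideanSpace ℝ (Fin d)) :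
    μH[p] (f '' Set.Icc 0 T) ≤ ENNReal.ofReal (2 ^ p) * pVariation d p T f :=
  hausdorff_image_le_pVariation_general d T p hp f
end

section
/- Let μ be a Lévy measure on ℝ^d satisfying: there is β > 1 with sup_{ℓ ∈ S^{d-1}} q^U(rℓ) ≤ β inf_{ℓ ∈ S^{d-1}} q^L(rℓ) for all r ≥ 1, where q^U(ξ) = ∫ (1 ∧ ⟨ξ,z⟩²) μ(dz) and q^L(ξ) = ∫_{|⟨ξ,z⟩|≤1} ⟨ξ,z⟩² μ(dz). Then the Lévy–Khintchine exponent q(ξ) = ∫ (1 - cos⟨ξ,z⟩) μ(dz) satisfies c₁ q^L(ξ) ≤ q(ξ) ≤ c₂ q^L(ξ) for all |ξ| ≥ 1, with c₁ = 1 - cos 1 and c₂ = 2β; i.e. q ≍ q^L ≍ q^U for |ξ| ≥ 1. -/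
open MeasureTheory Real
open scoped ENNReal RealInnerProductSpace

/-!
The integrands are compared pointwise: `(1 - cos 1) t² ≤ 1 - cos t` for `|t| ≤ 1` (concavity of
`sin` on `[0, π]`, applied to `1 - cos t = 2 sin² (t / 2)`) and `1 - cos t ≤ 2 min 1 t²`.
Integrating gives `(1 - cos 1) q^L ≤ q ≤ 2 q^U`, and the non-oscillation hypothesis in the
direction `ξ / ‖ξ‖` at radius `‖ξ‖` turns `q^U (ξ)` into at most `β q^L (ξ)`.
-/

lemma Real.mul_sin_le_sin_mul {s x : ℝ} (hs₀ : 0 ≤ s) (hs₁ : s ≤ 1) (hx₀ : 0 ≤ x) (hx : x ≤ π) :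
    s * sin x ≤ sin (s * x) := by
  have h := strictConcaveOn_sin_Icc.concaveOn.2 (⟨le_rfl, pi_pos.le⟩ : (0 : ℝ) ∈ Set.Icc 0 π)
    ⟨hx₀, hx⟩ (sub_nonneg.2 hs₁) hs₀ (sub_add_cancel 1 s)
  simpa only [smul_eq_mul, mul_zero, sin_zero, zero_add] using h

lemma Real.one_sub_cos_one_mul_sq_le_one_sub_cos {t : ℝ} (ht : |t| ≤ 1) :
    (1 - cos 1) * t ^ 2 ≤ 1 - cos t := by
  have one_sub_cos_eq (u : ℝ) : 1 - cos u = 2 * sin (u / 2) ^ 2 := by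
    rw [sin_sq_eq_half_sub, mul_div_cancel₀ u two_ne_zero]; ring
  have hsin : |t| * sin (1 / 2) ≤ sin (|t| / 2) := by
    simpa only [mul_one_div] using
      mul_sin_le_sin_mul (x := 1 / 2) (abs_nonneg t) ht (by norm_num) (by linarith [pi_gt_three])
  have hsin₀ : 0 ≤ sin (1 / 2) :=
    sin_nonneg_of_nonneg_of_le_pi (by norm_num) (by linarith [pi_gt_three])
  rw [← cos_abs t, ← sq_abs t, one_sub_cos_eq, one_sub_cos_eq]
  nlinarith [mul_self_le_mul_self (mul_nonneg (abs_nonneg t) hsin₀) hsin]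

lemma Real.one_sub_cos_le_two_mul_min_one_sq (t : ℝ) : 1 - cos t ≤ 2 * min 1 (t ^ 2) := by
  rcases le_total (t ^ 2) 1 with h | h
  · rw [min_eq_right h]
    linarith [one_sub_sq_div_two_le_cos (x := t), sq_nonneg t]
  · rw [min_eq_left h]
    linarith [neg_one_le_cos t]

section Lintegral

variable {α : Type*} [MeasurableSpace α] (μ : Measure α) (f : α → ℝ)

lemma lintegral_one_sub_cos_ge (hf : Measurable f) :
    ENNReal.ofReal (1 - cos 1) * ∫⁻ x in {x | |f x| ≤ 1}, ENNReal.ofReal (f x ^ 2) ∂μ ≤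
      ∫⁻ x, ENNReal.ofReal (1 - cos (f x)) ∂μ := by
  have hc : 0 ≤ 1 - cos 1 := sub_nonneg.2 (cos_le_one 1)
  calc ENNReal.ofReal (1 - cos 1) * ∫⁻ x in {x | |f x| ≤ 1}, ENNReal.ofReal (f x ^ 2) ∂μ
      = ∫⁻ x in {x | |f x| ≤ 1}, ENNReal.ofReal ((1 - cos 1) * f x ^ 2) ∂μ := by
        rw [← lintegral_const_mul' _ _ ENNReal.ofReal_ne_top]
        simp_rw [ENNReal.ofReal_mul hc]
    _ ≤ ∫⁻ x in {x | |f x| ≤ 1}, ENNReal.ofReal (1 - cos (f x)) ∂μ :=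
        setLIntegral_mono' (measurableSet_le hf.abs measurable_const) fun x hx =>
          ENNReal.ofReal_le_ofReal (one_sub_cos_one_mul_sq_le_one_sub_cos hx)
    _ ≤ ∫⁻ x, ENNReal.ofReal (1 - cos (f x)) ∂μ := setLIntegral_le_lintegral _ _

lemma lintegral_one_sub_cos_le :
    ∫⁻ x, ENNReal.ofReal (1 - cos (f x)) ∂μ ≤
      ENNReal.ofReal 2 * ∫⁻ x, ENNReal.ofReal (min 1 (f x ^ 2)) ∂μ := by
  rw [← lintegral_const_mul' _ _ ENNReal.ofReal_ne_top]
  simp_rw [← ENNReal.ofReal_mul zero_le_two]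
  exact lintegral_mono fun x => ENNReal.ofReal_le_ofReal (one_sub_cos_le_two_mul_min_one_sq _)

end Lintegral

theorem levy_exponent_comparable_general
    (d : ℕ) (μ : Measure (EuclideanSpace ℝ (Fin d)))
    (β : ℝ)
    (hosc : ∀ r : ℝ, 1 ≤ r → ∀ ℓ ℓ' : EuclideanSpace ℝ (Fin d), ‖ℓ‖ = 1 → ‖ℓ'‖ = 1 →
      (∫⁻ z, ENNReal.ofReal (min 1 (⟪r • ℓ, z⟫ ^ 2)) ∂μ) ≤
        ENNReal.ofReal β *
          ∫⁻ z in {z | |⟪r • ℓ', z⟫| ≤ 1}, ENNReal.ofReal (⟪r • ℓ', z⟫ ^ 2) ∂μ) :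
    ∀ ξ : EuclideanSpace ℝ (Fin d), 1 ≤ ‖ξ‖ →
      ENNReal.ofReal (1 - Real.cos 1) *
          (∫⁻ z in {z | |⟪ξ, z⟫| ≤ 1}, ENNReal.ofReal (⟪ξ, z⟫ ^ 2) ∂μ) ≤
        (∫⁻ z, ENNReal.ofReal (1 - Real.cos ⟪ξ, z⟫) ∂μ) ∧
      (∫⁻ z, ENNReal.ofReal (1 - Real.cos ⟪ξ, z⟫) ∂μ) ≤
        ENNReal.ofReal (2 * β) *
          ∫⁻ z in {z | |⟪ξ, z⟫| ≤ 1}, ENNReal.ofReal (⟪ξ, z⟫ ^ 2) ∂μ := by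
  intro ξ hξ
  have hinner : Measurable fun z => ⟪ξ, z⟫ := (continuous_const.inner continuous_id).measurable
  refine ⟨lintegral_one_sub_cos_ge μ _ hinner, ?_⟩
  have hξ₀ : ξ ≠ 0 := norm_pos_iff.1 (zero_lt_one.trans_le hξ)
  have hunit : ‖NormedSpace.normalize ξ‖ = 1 := NormedSpace.norm_normalize_eq_one_iff.2 hξ₀
  have hq := hosc ‖ξ‖ hξ _ _ hunit hunit
  rw [NormedSpace.norm_smul_normalize] at hq
  calc ∫⁻ z, ENNReal.ofReal (1 - cos ⟪ξ, z⟫) ∂μ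
      ≤ ENNReal.ofReal 2 * ∫⁻ z, ENNReal.ofReal (min 1 (⟪ξ, z⟫ ^ 2)) ∂μ :=
        lintegral_one_sub_cos_le μ _
    _ ≤ ENNReal.ofReal 2 * (ENNReal.ofReal β *
          ∫⁻ z in {z | |⟪ξ, z⟫| ≤ 1}, ENNReal.ofReal (⟪ξ, z⟫ ^ 2) ∂μ) := by gcongr
    _ = _ := by rw [ENNReal.ofReal_mul zero_le_two, mul_assoc]

/-- under the non-oscillation condition
`sup_{ℓ∈S^{d-1}} q^U(rℓ) ≤ β inf_{ℓ∈S^{d-1}} q^L(rℓ)` for `r ≥ 1`, the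
Lévy–Khintchine exponent `q` satisfies `(1-cos 1) q^L(ξ) ≤ q(ξ) ≤ 2β q^L(ξ)` for
`|ξ| ≥ 1`; i.e. `q ≍ q^L ≍ q^U` for `|ξ| ≥ 1`. -/
theorem levy_exponent_comparable
    (d : ℕ) (μ : Measure (EuclideanSpace ℝ (Fin d)))
    (hμ : ∫⁻ z, ENNReal.ofReal (min 1 (‖z‖ ^ 2)) ∂μ < ∞)
    (β : ℝ) (hβ : 1 < β)
    (hosc : ∀ r : ℝ, 1 ≤ r → ∀ ℓ ℓ' : EuclideanSpace ℝ (Fin d), ‖ℓ‖ = 1 → ‖ℓ'‖ = 1 →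
      (∫⁻ z, ENNReal.ofReal (min 1 (⟪r • ℓ, z⟫ ^ 2)) ∂μ) ≤
        ENNReal.ofReal β *
          ∫⁻ z in {z | |⟪r • ℓ', z⟫| ≤ 1}, ENNReal.ofReal (⟪r • ℓ', z⟫ ^ 2) ∂μ) :
    ∀ ξ : EuclideanSpace ℝ (Fin d), 1 ≤ ‖ξ‖ →
      ENNReal.ofReal (1 - Real.cos 1) *
          (∫⁻ z in {z | |⟪ξ, z⟫| ≤ 1}, ENNReal.ofReal (⟪ξ, z⟫ ^ 2) ∂μ) ≤
        (∫⁻ z, ENNReal.ofReal (1 - Real.cos ⟪ξ, z⟫) ∂μ) ∧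
      (∫⁻ z, ENNReal.ofReal (1 - Real.cos ⟪ξ, z⟫) ∂μ) ≤
        ENNReal.ofReal (2 * β) *
          ∫⁻ z in {z | |⟪ξ, z⟫| ≤ 1}, ENNReal.ofReal (⟪ξ, z⟫ ^ 2) ∂μ :=
  levy_exponent_comparable_general d μ β hosc
end
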